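/- arXiv:math-ph/0312056 — 5 statements merged into one kernel-verified Lean document; each statement's English description precedes it below -/
import Mathlib

section
/- Let U : [0,∞) → ℝ be continuous, let T ≥ 0, and let z, w ∈ ℂ with z ≠ w. If g : [0,T] → ℂ is a solution of the chordal Löwner equation driven by U with initial value z, and h : [0,T] → ℂ is a solution of the chordal Löwner equation driven by U with initial value w, then g(T) ≠ h(T). In particular the Löwner flow is injective: distinct initial points give distinct values at every time at which both solutions exist. -/
/-!
Two solutions with the same value at time `T` solve, backwards in time from `T`, the same ODE
`ẋ = 2 / (x - U t)`. By compactness of `[0, T]` both stay at distance at least some `r > 0` from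
the driver, and on `{x | r ≤ ‖x - U t‖}` the vector field is Lipschitz with constant `2 / r²`,
so backward uniqueness for Lipschitz ODEs forces them to agree on `[0, T]`, in particular at `0`.
-/

open Set Filter

/-- `g` solves the chordal Löwner equation driven by `U` with initial value `z`
on the time interval `I`. -/
def IsLoewnerSolution (U : ℝ → ℝ) (I : Set ℝ) (z : ℂ) (g : ℝ → ℂ) : Prop :=
  g 0 = z ∧ (∀ t ∈ I, g t ≠ (U t : ℂ)) ∧
    ∀ t ∈ I, HasDerivWithinAt g (2 / (g t - (U t : ℂ))) I t

open scoped NNReal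

theorem lipschitzOnWith_const_div_sub {α : Type*} [NormedField α] (a c : α) {r : ℝ≥0}
    (hr : 0 < r) :
    LipschitzOnWith (‖a‖₊ / r ^ 2) (fun x => a / (x - c)) {x | r ≤ ‖x - c‖₊} := by
  refine LipschitzOnWith.of_dist_le_mul fun x hx y hy => ?_
  have hx' : (r : ℝ) ≤ ‖x - c‖ := hx
  have hy' : (r : ℝ) ≤ ‖y - c‖ := hy
  have hr' : (0 : ℝ) < r := hr
  have hxc : x - c ≠ 0 := norm_pos_iff.mp (hr'.trans_le hx')
  have hyc : y - c ≠ 0 := norm_pos_iff.mp (hr'.trans_le hy')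
  calc dist (a / (x - c)) (a / (y - c))
      = ‖a‖ * (dist x y / (‖x - c‖ * ‖y - c‖)) := by
        rw [div_eq_mul_inv, div_eq_mul_inv, dist_eq_norm, ← mul_sub, norm_mul, ← dist_eq_norm,
          dist_inv_inv₀ hxc hyc, dist_sub_right]
    _ ≤ ‖a‖ * (dist x y / (r * r)) := by gcongr
    _ = ↑(‖a‖₊ / r ^ 2) * dist x y := by push_cast; ring

theorem IsCompact.exists_pos_forall_le_nnnorm {α E : Type*} [TopologicalSpace α]
    [NormedAddCommGroup E] {K : Set α} {f : α → E} (hK : IsCompact K) (hf : ContinuousOn f K)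
    (hf₀ : ∀ x ∈ K, f x ≠ 0) : ∃ r : ℝ≥0, 0 < r ∧ ∀ x ∈ K, r ≤ ‖f x‖₊ := by
  rcases K.eq_empty_or_nonempty with rfl | hne
  · exact ⟨1, one_pos, by simp⟩
  obtain ⟨x₀, hx₀, hmin⟩ := hK.exists_isMinOn hne hf.nnnorm
  exact ⟨‖f x₀‖₊, nnnorm_pos.mpr (hf₀ x₀ hx₀), hmin⟩

theorem HasDerivWithinAt.Iic_of_Icc {E : Type*} [NormedAddCommGroup E] [NormedSpace ℝ E]
    {f : ℝ → E} {f' : E} {a b t : ℝ} (hf : HasDerivWithinAt f f' (Icc a b) t) (ht : t ∈ Ioc a b) :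
    HasDerivWithinAt f f' (Iic t) t :=
  hf.mono_of_mem_nhdsWithin <|
    mem_of_superset (Icc_mem_nhdsLE ht.1) (Icc_subset_Icc_right ht.2)

namespace IsLoewnerSolution

variable {U : ℝ → ℝ} {I : Set ℝ} {z w : ℂ} {g h : ℝ → ℂ} {T : ℝ}

theorem continuousOn (hg : IsLoewnerSolution U I z g) : ContinuousOn g I :=
  fun t ht => (hg.2.2 t ht).continuousWithinAt

theorem exists_pos_forall_le_nnnorm_sub (hU : Continuous U)
    (hg : IsLoewnerSolution U (Icc 0 T) z g) :
    ∃ r : ℝ≥0, 0 < r ∧ ∀ t ∈ Icc 0 T, r ≤ ‖g t - U t‖₊ :=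
  isCompact_Icc.exists_pos_forall_le_nnnorm
    (hg.continuousOn.sub (Complex.continuous_ofReal.comp hU).continuousOn)
    fun t ht => sub_ne_zero.mpr (hg.2.1 t ht)

theorem eqOn_Icc_of_eq (hU : Continuous U) (hg : IsLoewnerSolution U (Icc 0 T) z g)
    (hh : IsLoewnerSolution U (Icc 0 T) w h) (hgh : g T = h T) : EqOn g h (Icc 0 T) := by
  obtain ⟨r₁, hr₁, hgr⟩ := hg.exists_pos_forall_le_nnnorm_sub hU
  obtain ⟨r₂, hr₂, hhr⟩ := hh.exists_pos_forall_le_nnnorm_sub hU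
  exact ODE_solution_unique_of_mem_Icc_left
    (f := g) (g := h) (s := fun t => {x : ℂ | min r₁ r₂ ≤ ‖x - U t‖₊})
    (fun t _ => lipschitzOnWith_const_div_sub 2 _ (lt_min hr₁ hr₂))
    hg.continuousOn (fun t ht => (hg.2.2 t (Ioc_subset_Icc_self ht)).Iic_of_Icc ht)
    (fun t ht => (min_le_left _ _).trans (hgr t (Ioc_subset_Icc_self ht)))
    hh.continuousOn (fun t ht => (hh.2.2 t (Ioc_subset_Icc_self ht)).Iic_of_Icc ht)
    (fun t ht => (min_le_right _ _).trans (hhr t (Ioc_subset_Icc_self ht))) hgh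

end IsLoewnerSolution

/-- The Löwner flow is injective: two solutions of the chordal Löwner equation driven by
the same continuous function with distinct initial values remain distinct at every time
at which both exist. -/
theorem loewner_flow_injective
    (U : ℝ → ℝ) (hU : Continuous U) (T : ℝ) (hT : 0 ≤ T)
    (z w : ℂ) (hzw : z ≠ w) (g h : ℝ → ℂ)
    (hg : IsLoewnerSolution U (Icc 0 T) z g)
    (hh : IsLoewnerSolution U (Icc 0 T) w h) :
    g T ≠ h T := by
  intro hgh
  apply hzw
  rw [← hg.1, ← hh.1]
  exact hg.eqOn_Icc_of_eq hU hh hgh (left_mem_Icc.mpr hT)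
end

section
/- Let U : [0,∞) → ℝ be continuous and let t ≥ 0. Suppose R > 0 is such that for every z ∈ ℂ with Im z > 0 and |z| > R there is a solution g(·, z) : [0,t] → ℂ of the chordal Löwner equation driven by U with initial value z. Then z · (g(t, z) − z) → 2t as z → ∞ within the set {z ∈ ℂ : Im z > 0 and |z| > R}. In particular, the normalized Löwner maps satisfy the expansion g(t,z) = z + 2t/z + O(z^{-2}) as z → ∞, so the hull at time t has capacity 2t. -/
open Set Filter

/-!
Let `M` bound `|U|` on `[0, t]` and put `ρ = |z| - M - 1`. As long as `g(s, z)` stays in the unit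
disc around `z`, the denominator `g - U` has modulus at least `ρ`, so `|∂ₛg| ≤ 2/ρ`; a fencing
argument shows that for `4t < ρ` the solution never leaves that disc. The derivative of
`z (g(s, z) - z) - 2s` is then `2 (z - g + U) / (g - U) = O(1/ρ)`, and the mean value inequality
gives `|z (g(t, z) - z) - 2t| ≤ 2 (1 + M) t / ρ → 0`.
-/

lemma sub_le_norm_sub_ofReal {z w : ℂ} {u M : ℝ} (hu : ‖u‖ ≤ M) (hw : ‖w - z‖ ≤ 1) :
    ‖z‖ - M - 1 ≤ ‖w - u‖ := by
  have htri : ‖z‖ ≤ ‖w - u‖ + ‖z - w‖ + ‖(u : ℂ)‖ := by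
    simpa using norm_add₃_le (a := w - u) (b := z - w) (c := (u : ℂ))
  rw [norm_sub_rev z, Complex.norm_real] at htri
  linarith

namespace IsLoewnerSolution

variable {U : ℝ → ℝ} {t M : ℝ} {z : ℂ} {g : ℝ → ℂ}

lemma norm_sub_le_one (hg : IsLoewnerSolution U (Icc 0 t) z g)
    (hM : ∀ s ∈ Icc 0 t, ‖U s‖ ≤ M) (hz : 4 * t < ‖z‖ - M - 1) :
    ∀ s ∈ Icc 0 t, ‖g s - z‖ ≤ 1 := by
  obtain ⟨hg0, -, hgd⟩ := hg
  set ρ := ‖z‖ - M - 1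
  intro s hs
  have hρ : 0 < ρ := by linarith [hs.1.trans hs.2]
  have hfar : 4 / ρ * t < 1 := by rwa [div_mul_eq_mul_div, div_lt_one hρ]
  -- fence `‖g s - z‖` by `4 s / ρ`, which grows faster than `‖∂ₛ g‖ ≤ 2 / ρ`
  have hfence : ∀ s ∈ Icc 0 t, ‖g s - z‖ ≤ 4 / ρ * s := by
    refine image_norm_le_of_norm_deriv_right_lt_deriv_boundary (B' := fun _ => 4 / ρ)
      (fun s hs => ((hgd s hs).sub_const z).continuousWithinAt)
      (fun s hs => ((hgd s (Ico_subset_Icc_self hs)).sub_const z).mono_of_mem_nhdsWithin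
        (mem_of_superset (Icc_mem_nhdsGE hs.2) (Icc_subset_Icc_left hs.1)))
      (by simp [hg0]) (fun s => (hasDerivAt_id s).const_mul _ |>.congr_deriv (mul_one _)) ?_
    intro s hs hfs
    have hclose : ‖g s - z‖ ≤ 1 := by
      rw [hfs]
      exact (mul_le_mul_of_nonneg_left hs.2.le (by positivity)).trans hfar.le
    have hden : ρ ≤ ‖g s - U s‖ := sub_le_norm_sub_ofReal (hM s (Ico_subset_Icc_self hs)) hclose
    calc ‖2 / (g s - U s)‖ = 2 / ‖g s - U s‖ := by rw [norm_div, Complex.norm_two]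
      _ ≤ 2 / ρ := by gcongr
      _ < 4 / ρ := by gcongr; norm_num
  calc ‖g s - z‖ ≤ 4 / ρ * s := hfence s hs
    _ ≤ 4 / ρ * t := by gcongr; exact hs.2
    _ ≤ 1 := hfar.le

lemma norm_mul_sub_sub_le (hg : IsLoewnerSolution U (Icc 0 t) z g)
    (hM : ∀ s ∈ Icc 0 t, ‖U s‖ ≤ M) (hz : 4 * t < ‖z‖ - M - 1) (ht : 0 ≤ t) :
    ‖z * (g t - z) - ((2 * t : ℝ) : ℂ)‖ ≤ 2 * (1 + M) * t / (‖z‖ - M - 1) := by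
  have hclose := hg.norm_sub_le_one hM hz
  obtain ⟨hg0, -, hgd⟩ := hg
  set ρ := ‖z‖ - M - 1
  have hρ : 0 < ρ := by linarith
  have hderiv : ∀ s ∈ Icc 0 t, HasDerivWithinAt (fun s : ℝ => z * (g s - z) - ((2 * s : ℝ) : ℂ))
      (z * (2 / (g s - U s)) - 2) (Icc 0 t) s := by
    intro s hs
    have hlin : HasDerivAt (fun s : ℝ => ((2 * s : ℝ) : ℂ)) 2 s := by
      simpa using ((hasDerivAt_id s).const_mul (2 : ℝ)).ofReal_comp
    exact (((hgd s hs).sub_const z).const_mul z).sub hlin.hasDerivWithinAt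
  have hbound : ∀ s ∈ Icc 0 t, ‖z * (2 / (g s - U s)) - 2‖ ≤ 2 * (1 + M) / ρ := by
    intro s hs
    have hden : ρ ≤ ‖g s - U s‖ := sub_le_norm_sub_ofReal (hM s hs) (hclose s hs)
    have hne : g s - U s ≠ 0 := norm_pos_iff.mp (hρ.trans_le hden)
    have hM0 : 0 ≤ M := (norm_nonneg _).trans (hM s hs)
    have hnum : ‖z - g s + U s‖ ≤ 1 + M := by
      calc ‖z - g s + U s‖ ≤ ‖g s - z‖ + ‖U s‖ := by
            rw [norm_sub_rev (g s), ← Complex.norm_real]; exact norm_add_le _ _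
        _ ≤ 1 + M := add_le_add (hclose s hs) (hM s hs)
    calc ‖z * (2 / (g s - U s)) - 2‖ = 2 * ‖z - g s + U s‖ / ‖g s - U s‖ := by
          rw [← Complex.norm_two, ← norm_mul, ← norm_div]; congr 1; field_simp; ring
      _ ≤ 2 * (1 + M) / ρ := by gcongr
  have hmvt := (convex_Icc 0 t).norm_image_sub_le_of_norm_hasDerivWithin_le hderiv hbound
    (left_mem_Icc.2 ht) (right_mem_Icc.2 ht)
  simpa [hg0, abs_of_nonneg ht, div_mul_eq_mul_div, mul_right_comm] using hmvt

end IsLoewnerSolution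

theorem loewner_capacity_two_t_general
    (U : ℝ → ℝ) (hU : Continuous U) (t : ℝ) (ht : 0 ≤ t) (R : ℝ)
    (G : ℝ → ℂ → ℂ)
    (hG : ∀ z : ℂ, 0 < z.im → R < ‖z‖ →
      IsLoewnerSolution U (Icc 0 t) z (fun s => G s z)) :
    Tendsto (fun z : ℂ => z * (G t z - z))
      (comap (fun z : ℂ => ‖z‖) atTop ⊓
        𝓟 {z : ℂ | 0 < z.im ∧ R < ‖z‖})
      (nhds ((2 * t : ℝ) : ℂ)) := by
  obtain ⟨M, hM⟩ := (isCompact_Icc (a := 0) (b := t)).exists_bound_of_continuousOn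
    hU.continuousOn
  have hρ : Tendsto (fun z : ℂ => ‖z‖ - M - 1)
      (comap (fun z : ℂ => ‖z‖) atTop ⊓ 𝓟 {z : ℂ | 0 < z.im ∧ R < ‖z‖}) atTop :=
    tendsto_atTop_add_const_right _ _ (tendsto_atTop_add_const_right _ _
      (tendsto_comap.mono_left inf_le_left))
  rw [← tendsto_sub_nhds_zero_iff]
  refine squeeze_zero_norm' ?_
    ((tendsto_const_nhds (x := 2 * (1 + M) * t)).div_atTop hρ)
  filter_upwards [hρ.eventually_gt_atTop (4 * t), mem_inf_of_right (mem_principal_self _)]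
    with z hz ⟨him, hR⟩
  exact (hG z him hR).norm_mul_sub_sub_le hM hz ht

/-- The normalized Löwner maps satisfy `g(t,z) = z + 2t/z + O(z⁻²)` as `z → ∞`:
`z·(g(t,z) − z) → 2t` as `z → ∞` within the upper half-plane (outside radius `R`),
so the hull at time `t` has capacity `2t`. -/
theorem loewner_capacity_two_t
    (U : ℝ → ℝ) (hU : Continuous U) (t : ℝ) (ht : 0 ≤ t) (R : ℝ) (hR : 0 < R)
    (G : ℝ → ℂ → ℂ)
    (hG : ∀ z : ℂ, 0 < z.im → R < ‖z‖ →
      IsLoewnerSolution U (Icc 0 t) z (fun s => G s z)) :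
    Tendsto (fun z : ℂ => z * (G t z - z))
      (comap (fun z : ℂ => ‖z‖) atTop ⊓
        𝓟 {z : ℂ | 0 < z.im ∧ R < ‖z‖})
      (nhds ((2 * t : ℝ) : ℂ)) :=
  loewner_capacity_two_t_general U hU t ht R G hG
end

section
/- Let U : [0,∞) → ℝ be continuous, let t₀ ≥ 0, and let w ∈ ℂ with Im w > 0. Then there exists z ∈ ℂ with Im z > 0 and a solution g : [0,t₀] → ℂ of the chordal Löwner equation driven by U with initial value z such that Im g(t) > 0 for all t ∈ [0,t₀] and g(t₀) = w. (Surjectivity of the Löwner maps onto the upper half-plane, proved via the inverse flow h'(t) = −2/(h(t) − U(t₀ − t)), h(0) = w, whose imaginary part is increasing.) -/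
/-!
Run the Löwner equation backwards from `w`: the reverse flow `h' = -2 / (h - U(t₀ - t))`,
`h 0 = w`, has `Im h' = 2 Im(h - U) / |h - U|² > 0`, so `Im h` only increases and the flow never
comes near the real line. Clamping the imaginary part at `Im w` therefore does not change the flow,
and the clamped field is bounded and globally Lipschitz, so Picard–Lindelöf solves it on all of
`[0, t₀]`. Reversing time, `g t = h (t₀ - t)` solves the Löwner equation from `z = h t₀` to `w`.
-/

open Set Filter

open scoped NNReal

theorem exists_forall_mem_Icc_hasDerivWithinAt_of_lipschitzWith
    {E : Type*} [NormedAddCommGroup E] [NormedSpace ℝ E] [CompleteSpace E]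
    {f : ℝ → E → E} {T L : ℝ} {K : ℝ≥0} (hT : 0 ≤ T)
    (hlip : ∀ t ∈ Icc 0 T, LipschitzWith K (f t))
    (hcont : ∀ x, ContinuousOn (f · x) (Icc 0 T))
    (hbound : ∀ t ∈ Icc 0 T, ∀ x, ‖f t x‖ ≤ L) (x₀ : E) :
    ∃ α : ℝ → E, α 0 = x₀ ∧ ∀ t ∈ Icc 0 T, HasDerivWithinAt α (f t (α t)) (Icc 0 T) t := by
  have hPL : IsPicardLindelof f (tmin := 0) (tmax := T) ⟨0, left_mem_Icc.2 hT⟩ x₀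
      (L.toNNReal * T.toNNReal) 0 L.toNNReal K :=
    { lipschitzOnWith := fun t ht => (hlip t ht).lipschitzOnWith
      continuousOn := fun x _ => hcont x
      norm_le := fun t ht x _ => (hbound t ht x).trans (Real.le_coe_toNNReal L)
      mul_max_le := by simp [max_eq_left hT, Real.coe_toNNReal _ hT] }
  exact hPL.exists_eq_forall_mem_Icc_hasDerivWithinAt₀

theorem HasDerivWithinAt.comp_const_sub_of_mapsTo {E : Type*} [NormedAddCommGroup E]
    [NormedSpace ℝ E] {f : ℝ → E} {f' : E} {s s' : Set ℝ} {a t : ℝ}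
    (hf : HasDerivWithinAt f f' s (a - t)) (hs : MapsTo (a - ·) s' s) :
    HasDerivWithinAt (fun u => f (a - u)) (-f') s' t := by
  simpa [Function.comp_def] using hf.scomp t ((hasDerivAt_id t).const_sub a).hasDerivWithinAt hs

theorem monotoneOn_im_of_hasDerivWithinAt {h h' : ℝ → ℂ} {a b : ℝ}
    (hd : ∀ t ∈ Icc a b, HasDerivWithinAt h (h' t) (Icc a b) t)
    (him : ∀ t ∈ Icc a b, 0 ≤ (h' t).im) :
    MonotoneOn (fun t => (h t).im) (Icc a b) := by
  refine monotoneOn_of_hasDerivWithinAt_nonneg (convex_Icc a b)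
    (Complex.continuous_im.comp_continuousOn fun t ht => (hd t ht).continuousWithinAt)
    (fun t ht => ?_) (fun t ht => him t (interior_subset ht))
  exact Complex.imCLM.hasFDerivAt.comp_hasDerivWithinAt t
    ((hd t (interior_subset ht)).mono interior_subset)

theorem im_neg_two_div_pos {ζ : ℂ} (hζ : 0 < ζ.im) : 0 < (-2 / ζ).im := by
  have hnormSq : 0 < Complex.normSq ζ := Complex.normSq_pos.2 (by rintro rfl; simp at hζ)
  have him : (-2 / ζ).im = 2 * ζ.im / Complex.normSq ζ := by simp [Complex.div_im]; ring
  rw [him]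
  positivity

def clampIm (c : ℝ) (z : ℂ) : ℂ := ⟨z.re, max z.im c⟩

@[simp] theorem clampIm_re (c : ℝ) (z : ℂ) : (clampIm c z).re = z.re := rfl

@[simp] theorem clampIm_im (c : ℝ) (z : ℂ) : (clampIm c z).im = max z.im c := rfl

theorem clampIm_of_le {c : ℝ} {z : ℂ} (h : c ≤ z.im) : clampIm c z = z :=
  Complex.ext rfl (max_eq_left h)

theorem lipschitzWith_clampIm (c : ℝ) : LipschitzWith 1 (clampIm c) := by
  refine LipschitzWith.of_dist_le_mul fun a b => ?_
  rw [Complex.dist_eq_re_im, Complex.dist_eq_re_im, NNReal.coe_one, one_mul]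
  simp only [clampIm_re, clampIm_im]
  refine Real.sqrt_le_sqrt (add_le_add le_rfl (sq_le_sq.2 ?_))
  exact abs_max_sub_max_le_abs a.im b.im c

theorem le_norm_clampIm_sub_ofReal (c x : ℝ) (z : ℂ) : c ≤ ‖clampIm c z - x‖ :=
  calc c ≤ (clampIm c z - x).im := by simp
    _ ≤ ‖clampIm c z - x‖ := Complex.im_le_norm _

noncomputable def reverseLoewnerField (c : ℝ) (V : ℝ → ℝ) (t : ℝ) (z : ℂ) : ℂ :=
  -2 / (clampIm c z - V t)

section reverseLoewnerField

variable {c : ℝ} {V : ℝ → ℝ}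

theorem clampIm_sub_ofReal_ne_zero (hc : 0 < c) (x : ℝ) (z : ℂ) : clampIm c z - x ≠ 0 :=
  norm_pos_iff.1 (hc.trans_le (le_norm_clampIm_sub_ofReal c x z))

theorem norm_reverseLoewnerField_le (hc : 0 < c) (t : ℝ) (z : ℂ) :
    ‖reverseLoewnerField c V t z‖ ≤ 2 / c := by
  rw [reverseLoewnerField, norm_div, norm_neg, Complex.norm_ofNat]
  exact div_le_div_of_nonneg_left zero_le_two hc (le_norm_clampIm_sub_ofReal c _ z)

theorem lipschitzWith_reverseLoewnerField (hc : 0 < c) (t : ℝ) :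
    LipschitzWith (2 / (c * c)).toNNReal (reverseLoewnerField c V t) := by
  refine LipschitzWith.of_dist_le_mul fun a b => ?_
  have hA := clampIm_sub_ofReal_ne_zero hc (V t) a
  have hB := clampIm_sub_ofReal_ne_zero hc (V t) b
  have hdist : dist (clampIm c a - V t) (clampIm c b - V t) ≤ dist a b := by
    simpa [dist_sub_right] using (lipschitzWith_clampIm c).dist_le_mul a b
  rw [Real.coe_toNNReal _ (by positivity), reverseLoewnerField, reverseLoewnerField,
    div_eq_mul_inv, div_eq_mul_inv, dist_eq_norm, ← mul_sub, norm_mul, ← dist_eq_norm,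
    dist_inv_inv₀ hA hB, norm_neg, Complex.norm_ofNat]
  calc 2 * (dist (clampIm c a - V t) (clampIm c b - V t) /
        (‖clampIm c a - V t‖ * ‖clampIm c b - V t‖))
      ≤ 2 * (dist a b / (c * c)) := by
        gcongr
        exacts [le_norm_clampIm_sub_ofReal c _ a, le_norm_clampIm_sub_ofReal c _ b]
    _ = 2 / (c * c) * dist a b := by ring

theorem continuous_reverseLoewnerField (hc : 0 < c) (hV : Continuous V) (z : ℂ) :
    Continuous (reverseLoewnerField c V · z) :=
  continuous_const.div (continuous_const.sub (Complex.continuous_ofReal.comp hV))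
    fun t => clampIm_sub_ofReal_ne_zero hc (V t) z

theorem im_reverseLoewnerField_pos (hc : 0 < c) (t : ℝ) (z : ℂ) :
    0 < (reverseLoewnerField c V t z).im :=
  im_neg_two_div_pos (hc.trans_le (by simp))

end reverseLoewnerField

theorem exists_reverseLoewner_flow {V : ℝ → ℝ} (hV : Continuous V) {T : ℝ} (hT : 0 ≤ T)
    {w : ℂ} (hw : 0 < w.im) :
    ∃ h : ℝ → ℂ, h 0 = w ∧ ∀ t ∈ Icc 0 T,
      w.im ≤ (h t).im ∧ HasDerivWithinAt h (-2 / (h t - V t)) (Icc 0 T) t := by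
  obtain ⟨h, h0, hd⟩ := exists_forall_mem_Icc_hasDerivWithinAt_of_lipschitzWith hT
    (fun t _ => lipschitzWith_reverseLoewnerField hw t)
    (fun z => (continuous_reverseLoewnerField hw hV z).continuousOn)
    (fun t _ z => norm_reverseLoewnerField_le hw t z) w
  have him : ∀ t ∈ Icc 0 T, w.im ≤ (h t).im := fun t ht => by
    simpa [h0] using monotoneOn_im_of_hasDerivWithinAt hd
      (fun s _ => (im_reverseLoewnerField_pos hw s _).le) (left_mem_Icc.2 hT) ht ht.1
  refine ⟨h, h0, fun t ht => ⟨him t ht, ?_⟩⟩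
  simpa [reverseLoewnerField, clampIm_of_le (him t ht)] using hd t ht

/-- Surjectivity of the Löwner maps onto the upper half-plane: for every `w ∈ ℍ` and
every time `t₀ ≥ 0` there is an initial point `z ∈ ℍ` whose Löwner flow stays in `ℍ`
and reaches `w` at time `t₀`. -/
theorem loewner_maps_surjective
    (U : ℝ → ℝ) (hU : Continuous U) (t₀ : ℝ) (ht₀ : 0 ≤ t₀)
    (w : ℂ) (hw : 0 < w.im) :
    ∃ z : ℂ, 0 < z.im ∧ ∃ g : ℝ → ℂ,
      IsLoewnerSolution U (Icc 0 t₀) z g ∧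
      (∀ t ∈ Icc (0:ℝ) t₀, 0 < (g t).im) ∧
      g t₀ = w := by
  have hV : Continuous fun s => U (t₀ - s) := hU.comp (continuous_sub_left t₀)
  obtain ⟨h, h0, hh⟩ := exists_reverseLoewner_flow hV ht₀ hw
  have hrefl : MapsTo (t₀ - ·) (Icc 0 t₀) (Icc 0 t₀) :=
    fun s hs => ⟨sub_nonneg.2 hs.2, sub_le_self _ hs.1⟩
  have him : ∀ t ∈ Icc 0 t₀, 0 < (h (t₀ - t)).im :=
    fun t ht => hw.trans_le (hh _ (hrefl ht)).1
  refine ⟨h t₀, by simpa using him 0 (left_mem_Icc.2 ht₀), fun t => h (t₀ - t),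
    ⟨by simp, fun t ht heq => ?_, fun t ht => ?_⟩, him, by simp [h0]⟩
  · simpa [heq] using him t ht
  · simpa only [sub_sub_cancel, neg_div', neg_neg] using
      (hh _ (hrefl ht)).2.comp_const_sub_of_mapsTo hrefl
end

section
/- Let K be a nonempty hull (so K ∩ ℍ ≠ ∅), let g be a hydrodynamically normalized conformal bijection of ℍ∖K onto ℍ, and suppose the capacity a = lim_{z→∞} z·(g(z) − z) exists. Then a > 0: the capacity of every nonempty hull is strictly positive. -/
/-!
Let `f = g⁻¹ : ℍ → ℍ \ K`, holomorphic because `g` is injective. Schwarz–Pick for `f` at `z` and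
at `g(it)`, with `t → ∞` and `g(it) - it → 0`, gives Julia's inequality `Im z ≤ Im f(z)`. So
`φ = f - id` maps `ℍ` into the closed half-plane, hence into `ℍ` by the open mapping theorem
(`φ` is not constant: the constant would be `0`, but `f` moves the points of `K ∩ ℍ`). Now
`φ(g(it)) = it - g(it)` and `t · Im φ(g(it)) → a` by the definition of the capacity, and
Schwarz–Pick for `φ` at `i` and `g(it)`, multiplied by `t`, yields `|φ(i)|² ≤ a · Im φ(i)`.
-/

open Set Filter

/-- A (compact) hull in the upper half-plane: a compact subset `K` of the closed upper
half-plane such that `ℍ∖K` is a simply connected domain and `K = closure(K ∩ ℍ)`. -/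
def IsHull (K : Set ℂ) : Prop :=
  IsCompact K ∧ K ⊆ {z : ℂ | 0 ≤ z.im} ∧
    IsConnected ({z : ℂ | 0 < z.im} \ K) ∧
    SimplyConnectedSpace ↥({z : ℂ | 0 < z.im} \ K) ∧
    K = closure (K ∩ {z : ℂ | 0 < z.im})

open Complex ComplexConjugate Metric Topology Function

local notation "ℍ" => Set.ofPred fun z : ℂ => 0 < Complex.im z

theorem normSq_sub_eq_normSq_sub_conj_sub (p q : ℂ) :
    normSq (q - p) = normSq (q - conj p) - 4 * p.im * q.im := by
  simp only [normSq_apply, sub_re, sub_im, conj_re, conj_im]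
  ring

theorem normSq_sub_lt_normSq_sub_conj {p q : ℂ} (hp : 0 < p.im) (hq : 0 < q.im) :
    normSq (q - p) < normSq (q - conj p) := by
  linarith [normSq_sub_eq_normSq_sub_conj_sub p q, mul_pos (mul_pos four_pos hp) hq]

theorem norm_sub_lt_norm_sub_conj {p q : ℂ} (hp : 0 < p.im) (hq : 0 < q.im) :
    ‖q - p‖ < ‖q - conj p‖ := by
  simpa only [norm_def] using
    Real.sqrt_lt_sqrt (normSq_nonneg _) (normSq_sub_lt_normSq_sub_conj hp hq)

theorem sub_conj_ne_zero {p q : ℂ} (hp : 0 < p.im) (hq : 0 < q.im) : q - conj p ≠ 0 :=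
  norm_pos_iff.mp ((norm_nonneg _).trans_lt (norm_sub_lt_norm_sub_conj hp hq))

/-- The Möbius map of `ℍ` onto the unit disc sending `p` to `0`. -/
noncomputable def halfPlaneToDisc (p ζ : ℂ) : ℂ := (ζ - p) / (ζ - conj p)

noncomputable def discToHalfPlane (p ξ : ℂ) : ℂ := (p - conj p * ξ) / (1 - ξ)

theorem halfPlaneToDisc_mem_ball {p : ℂ} (hp : 0 < p.im) {ζ : ℂ} (hζ : 0 < ζ.im) :
    halfPlaneToDisc p ζ ∈ ball 0 1 := by
  rw [mem_ball_zero_iff, halfPlaneToDisc, norm_div,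
    div_lt_one (norm_pos_iff.mpr (sub_conj_ne_zero hp hζ))]
  exact norm_sub_lt_norm_sub_conj hp hζ

theorem one_sub_ne_zero_of_mem_ball {ξ : ℂ} (hξ : ξ ∈ ball (0 : ℂ) 1) : 1 - ξ ≠ 0 := by
  rintro h
  rw [← sub_eq_zero.mp h, mem_ball_zero_iff, norm_one] at hξ
  exact lt_irrefl _ hξ

theorem im_discToHalfPlane (p : ℂ) {ξ : ℂ} (hξ : 1 - ξ ≠ 0) :
    (discToHalfPlane p ξ).im = p.im * (1 - normSq ξ) / normSq (1 - ξ) := by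
  rw [discToHalfPlane, div_im]
  field_simp [normSq_eq_zero.not.mpr hξ]
  simp only [normSq_apply, mul_re, mul_im, conj_re, conj_im, sub_re, sub_im, one_re, one_im]
  ring

theorem discToHalfPlane_mem {p : ℂ} (hp : 0 < p.im) {ξ : ℂ} (hξ : ξ ∈ ball (0 : ℂ) 1) :
    0 < (discToHalfPlane p ξ).im := by
  have h1 := one_sub_ne_zero_of_mem_ball hξ
  rw [im_discToHalfPlane p h1]
  have : normSq ξ < 1 := by
    rw [mem_ball_zero_iff] at hξ
    rw [← Complex.sq_norm]
    nlinarith [norm_nonneg ξ]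
  exact div_pos (mul_pos hp (by linarith)) (normSq_pos.mpr h1)

theorem discToHalfPlane_zero (p : ℂ) : discToHalfPlane p 0 = p := by
  simp [discToHalfPlane]

theorem discToHalfPlane_halfPlaneToDisc {p : ℂ} (hp : 0 < p.im) {ζ : ℂ} (hζ : 0 < ζ.im) :
    discToHalfPlane p (halfPlaneToDisc p ζ) = ζ := by
  have hζp := sub_conj_ne_zero hp hζ
  have hpp : p - conj p ≠ 0 := sub_conj_ne_zero hp hp
  have h1 : ζ - conj p - (ζ - p) ≠ 0 := by rwa [sub_sub_sub_cancel_left]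
  rw [discToHalfPlane, halfPlaneToDisc]
  field_simp
  ring

theorem differentiableOn_discToHalfPlane (p : ℂ) :
    DifferentiableOn ℂ (discToHalfPlane p) (ball 0 1) :=
  fun _ hξ => DifferentiableAt.differentiableWithinAt <| by
    unfold discToHalfPlane
    fun_prop (disch := exact one_sub_ne_zero_of_mem_ball hξ)

theorem differentiableOn_halfPlaneToDisc {p : ℂ} (hp : 0 < p.im) :
    DifferentiableOn ℂ (halfPlaneToDisc p) ℍ :=
  fun _ hζ => DifferentiableAt.differentiableWithinAt <| by
    unfold halfPlaneToDisc
    fun_prop (disch := exact sub_conj_ne_zero hp hζ)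

/-- Schwarz–Pick lemma: a holomorphic self-map of `ℍ` does not increase the pseudo-hyperbolic
distance `‖halfPlaneToDisc z w‖`. -/
theorem norm_halfPlaneToDisc_le {F : ℂ → ℂ} (hF : DifferentiableOn ℂ F ℍ) (hFH : MapsTo F ℍ ℍ)
    {z w : ℂ} (hz : 0 < z.im) (hw : 0 < w.im) :
    ‖halfPlaneToDisc (F z) (F w)‖ ≤ ‖halfPlaneToDisc z w‖ := by
  have hFz : 0 < (F z).im := hFH hz
  have hΦ : MapsTo (halfPlaneToDisc (F z) ∘ F ∘ discToHalfPlane z) (ball 0 1) (ball 0 1) :=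
    fun ξ hξ => halfPlaneToDisc_mem_ball hFz (hFH (discToHalfPlane_mem hz hξ))
  have := norm_le_norm_of_mapsTo_ball
    ((differentiableOn_halfPlaneToDisc hFz).comp
      (hF.comp (differentiableOn_discToHalfPlane z) fun ξ hξ => discToHalfPlane_mem hz hξ)
      (hFH.comp fun ξ hξ => discToHalfPlane_mem hz hξ))
    (hΦ.mono_right ball_subset_closedBall)
    (by simp [discToHalfPlane_zero, halfPlaneToDisc])
    (mem_ball_zero_iff.mp (halfPlaneToDisc_mem_ball hz hw))
  simpa [discToHalfPlane_halfPlaneToDisc hz hw] using this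

theorem im_mul_im_mul_normSq_le {F : ℂ → ℂ} (hF : DifferentiableOn ℂ F ℍ) (hFH : MapsTo F ℍ ℍ)
    {z w : ℂ} (hz : 0 < z.im) (hw : 0 < w.im) :
    z.im * w.im * normSq (F w - conj (F z)) ≤ (F z).im * (F w).im * normSq (w - conj z) := by
  have hsp := norm_halfPlaneToDisc_le hF hFH hz hw
  rw [← sq_le_sq₀ (norm_nonneg _) (norm_nonneg _), halfPlaneToDisc, halfPlaneToDisc, norm_div,
    norm_div, div_pow, div_pow, Complex.sq_norm, Complex.sq_norm, Complex.sq_norm, Complex.sq_norm,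
    div_le_div_iff₀ (normSq_pos.mpr (sub_conj_ne_zero (hFH hz) (hFH hw)))
      (normSq_pos.mpr (sub_conj_ne_zero hz hw))] at hsp
  -- `1 - ‖halfPlaneToDisc z w‖ ^ 2 = 4 * z.im * w.im / normSq (w - conj z)`
  rw [normSq_sub_eq_normSq_sub_conj_sub (F z), normSq_sub_eq_normSq_sub_conj_sub z] at hsp
  linarith

theorem Set.InjOn.not_eventually_eq_nhds {X Y : Type*} [TopologicalSpace X] {U : Set X}
    {g : X → Y} {x : X} [(𝓝[≠] x).NeBot] (hinj : InjOn g U) (hU : U ∈ 𝓝 x) :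
    ¬∀ᶠ z in 𝓝 x, g z = g x := by
  intro hconst
  have hx : ∀ᶠ z in 𝓝[≠] x, z = x :=
    nhdsWithin_le_nhds ((hconst.and hU).mono fun z hz => hinj hz.2 (mem_of_mem_nhds hU) hz.1)
  exact (hx.and self_mem_nhdsWithin).exists.elim fun z hz => hz.2 hz.1

section InverseFunction

variable {U : Set ℂ} {g : ℂ → ℂ} {z₀ : ℂ}

theorem AnalyticAt.nhds_le_map_nhds_of_injOn (hg : AnalyticAt ℂ g z₀) (hU : U ∈ 𝓝 z₀)
    (hinj : InjOn g U) : 𝓝 (g z₀) ≤ map g (𝓝 z₀) :=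
  hg.eventually_constant_or_nhds_le_map_nhds.resolve_left (hinj.not_eventually_eq_nhds hU)

theorem AnalyticAt.eventually_deriv_ne_zero_of_injOn (hg : AnalyticAt ℂ g z₀) (hU : U ∈ 𝓝 z₀)
    (hinj : InjOn g U) : ∀ᶠ z in 𝓝[≠] z₀, deriv g z ≠ 0 := by
  refine hg.deriv.eventually_eq_zero_or_eventually_ne_zero.resolve_left fun hderiv => ?_
  obtain ⟨r, hr, hball⟩ := eventually_nhds_iff_ball.mp (hg.eventually_analyticAt.and hderiv)
  refine hinj.not_eventually_eq_nhds hU (mem_of_superset (ball_mem_nhds z₀ hr) fun z hz => ?_)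
  exact isOpen_ball.is_const_of_deriv_eq_zero (convex_ball z₀ r).isPreconnected
    (fun w hw => (hball w hw).1.differentiableAt.differentiableWithinAt)
    (fun w hw => (hball w hw).2) hz (mem_ball_self hr)

theorem continuousAt_invFunOn (hd : DifferentiableOn ℂ g U) (hUo : IsOpen U) (hinj : InjOn g U)
    (hz₀ : z₀ ∈ U) : ContinuousAt (invFunOn g U) (g z₀) := by
  have hleft : ∀ᶠ z in 𝓝 z₀, invFunOn g U (g z) = z :=
    eventually_of_mem (hUo.mem_nhds hz₀) fun z hz => hinj.leftInvOn_invFunOn hz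
  rw [ContinuousAt, hinj.leftInvOn_invFunOn hz₀]
  exact (tendsto_map'_iff.mpr (tendsto_id.congr' (hleft.mono fun z hz => hz.symm))).mono_left
    ((hd.analyticAt (hUo.mem_nhds hz₀)).nhds_le_map_nhds_of_injOn (hUo.mem_nhds hz₀) hinj)

theorem image_mem_nhds_of_injOn (hd : DifferentiableOn ℂ g U) (hUo : IsOpen U) (hinj : InjOn g U)
    {V : Set ℂ} (hV : V ∈ 𝓝 z₀) (hz₀ : z₀ ∈ U) : g '' V ∈ 𝓝 (g z₀) :=
  (hd.analyticAt (hUo.mem_nhds hz₀)).nhds_le_map_nhds_of_injOn (hUo.mem_nhds hz₀) hinj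
    (image_mem_map hV)

theorem differentiableAt_invFunOn_of_deriv_ne_zero (hd : DifferentiableOn ℂ g U)
    (hUo : IsOpen U) (hinj : InjOn g U) {z : ℂ} (hz : z ∈ U) (hz' : deriv g z ≠ 0) :
    DifferentiableAt ℂ (invFunOn g U) (g z) := by
  have hg : HasDerivAt g (deriv g z) (invFunOn g U (g z)) := by
    rw [hinj.leftInvOn_invFunOn hz]
    exact (hd.differentiableAt (hUo.mem_nhds hz)).hasDerivAt
  exact (hg.of_local_left_inverse (continuousAt_invFunOn hd hUo hinj hz) hz'
    (eventually_of_mem (image_mem_nhds_of_injOn hd hUo hinj (hUo.mem_nhds hz) hz)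
      fun w hw => invFunOn_eq hw)).differentiableAt

/-- The critical points of `g` are isolated; away from them the inverse function theorem applies,
and the remaining point is a removable singularity of the continuous inverse. -/
theorem differentiableAt_invFunOn (hd : DifferentiableOn ℂ g U) (hUo : IsOpen U)
    (hinj : InjOn g U) (hz₀ : z₀ ∈ U) : DifferentiableAt ℂ (invFunOn g U) (g z₀) := by
  set N := U ∩ {z | z ≠ z₀ → deriv g z ≠ 0}
  have hN : N ∈ 𝓝 z₀ := inter_mem (hUo.mem_nhds hz₀) (eventually_nhdsWithin_iff.mp
    ((hd.analyticAt (hUo.mem_nhds hz₀)).eventually_deriv_ne_zero_of_injOn (hUo.mem_nhds hz₀) hinj))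
  have hs := image_mem_nhds_of_injOn hd hUo hinj hN hz₀
  refine ((differentiableOn_compl_singleton_and_continuousAt_iff hs).mp
    ⟨?_, continuousAt_invFunOn hd hUo hinj hz₀⟩).differentiableAt hs
  rintro _ ⟨⟨z, ⟨hzU, hz⟩, rfl⟩, hne⟩
  exact (differentiableAt_invFunOn_of_deriv_ne_zero hd hUo hinj hzU
    (hz fun h => hne (h ▸ rfl))).differentiableWithinAt

theorem differentiableOn_invFunOn (hd : DifferentiableOn ℂ g U) (hUo : IsOpen U)
    (hinj : InjOn g U) : DifferentiableOn ℂ (invFunOn g U) (g '' U) := by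
  rintro _ ⟨z, hz, rfl⟩
  exact (differentiableAt_invFunOn hd hUo hinj hz).differentiableWithinAt

end InverseFunction

theorem normSq_I_mul_add (t : ℝ) (b : ℂ) :
    normSq (I * t + b) = t ^ 2 + 2 * t * b.im + normSq b := by
  simp only [normSq_apply, add_re, add_im, mul_re, mul_im, I_re, I_im, ofReal_re, ofReal_im]
  ring

section Asymptotics

variable {b : ℝ → ℂ} {b₀ : ℂ}

theorem tendsto_normSq_I_mul_add_div_sq (hb : Tendsto b atTop (𝓝 b₀)) :
    Tendsto (fun t : ℝ => normSq (I * t + b t) / t ^ 2) atTop (𝓝 1) := by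
  have hlim : Tendsto (fun t : ℝ => 1 + 2 * (b t).im / t + normSq (b t) / t ^ 2) atTop
      (𝓝 (1 + 0 + 0)) :=
    (tendsto_const_nhds.add (((continuous_im.tendsto _).comp hb).const_mul 2 |>.div_atTop
      tendsto_id)).add (((continuous_normSq.tendsto _).comp hb).div_atTop
        (tendsto_pow_atTop two_ne_zero))
  rw [add_zero, add_zero] at hlim
  refine hlim.congr' ((eventually_ne_atTop 0).mono fun t ht => ?_)
  dsimp only
  rw [normSq_I_mul_add]
  field_simp

theorem tendsto_im_I_mul_add_div (hb : Tendsto b atTop (𝓝 b₀)) :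
    Tendsto (fun t : ℝ => (I * t + b t).im / t) atTop (𝓝 1) := by
  have hlim : Tendsto (fun t : ℝ => 1 + (b t).im / t) atTop (𝓝 (1 + 0)) :=
    tendsto_const_nhds.add (((continuous_im.tendsto _).comp hb).div_atTop tendsto_id)
  rw [add_zero] at hlim
  refine hlim.congr' ((eventually_ne_atTop 0).mono fun t ht => ?_)
  simp only [add_im, mul_im, I_re, I_im, ofReal_re, ofReal_im]
  field_simp
  ring

theorem eventually_I_mul_add_mem (hb : Tendsto b atTop (𝓝 b₀)) :
    ∀ᶠ t : ℝ in atTop, I * t + b t ∈ ℍ := by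
  filter_upwards [(tendsto_im_I_mul_add_div hb).eventually (lt_mem_nhds one_pos),
    eventually_gt_atTop 0] with t h1 ht
  exact (div_pos_iff_of_pos_right ht).mp h1

end Asymptotics

section SelfMaps

variable {F : ℂ → ℂ}

theorem mapsTo_upperHalfPlane_or_eq_const (hF : DifferentiableOn ℂ F ℍ)
    (him : ∀ z ∈ ℍ, 0 ≤ (F z).im) : (∃ b, ∀ z ∈ ℍ, F z = b) ∨ MapsTo F ℍ ℍ := by
  have hH : IsOpen ℍ := isOpen_lt continuous_const continuous_im
  refine (hF.analyticOnNhd hH |>.is_constant_or_isOpen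
    (convex_halfSpace_im_gt 0).isPreconnected).imp_right fun hopen => ?_
  have hsub : F '' ℍ ⊆ interior {z : ℂ | 0 ≤ z.im} :=
    interior_maximal (image_subset_iff.mpr him) (hopen ℍ subset_rfl hH)
  rw [interior_setOfPred_le_im] at hsub
  exact mapsTo_iff_image_subset.mpr hsub

variable {c : ℝ → ℂ} {c₀ z : ℂ}

/-- Julia's lemma at `∞`. -/
theorem im_le_im_of_tendsto (hF : DifferentiableOn ℂ F ℍ) (hFH : MapsTo F ℍ ℍ)
    (hc : Tendsto c atTop (𝓝 c₀)) {e₀ : ℂ}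
    (he : Tendsto (fun t : ℝ => F (I * t + c t) - I * t) atTop (𝓝 e₀)) (hz : 0 < z.im) :
    z.im ≤ (F z).im := by
  set e := fun t : ℝ => F (I * t + c t) - I * t
  have hbound : ∀ᶠ t : ℝ in atTop,
      z.im * ((I * t + c t).im / t) * (normSq (I * t + (e t - conj (F z))) / t ^ 2)
        ≤ (F z).im * ((I * t + e t).im / t) * (normSq (I * t + (c t - conj z)) / t ^ 2) := by
    -- Schwarz–Pick at `z` and `I * t + c t`, divided by `t ^ 3`
    filter_upwards [eventually_I_mul_add_mem hc, eventually_gt_atTop 0] with t hw ht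
    have hsp := im_mul_im_mul_normSq_le hF hFH hz hw
    rw [show F (I * t + c t) = I * t + e t by ring] at hsp
    rw [← div_le_div_iff_of_pos_right (pow_pos ht 3)] at hsp
    simp only [add_sub_assoc] at hsp
    refine (Eq.le ?_).trans (hsp.trans (Eq.le ?_)) <;> ring
  have hlim := le_of_tendsto_of_tendsto
    (((tendsto_im_I_mul_add_div hc).const_mul _).mul
      (tendsto_normSq_I_mul_add_div_sq (he.sub_const _)))
    (((tendsto_im_I_mul_add_div he).const_mul _).mul
      (tendsto_normSq_I_mul_add_div_sq (hc.sub_const _))) hbound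
  simpa using hlim

theorem im_mul_normSq_le_of_tendsto (hF : DifferentiableOn ℂ F ℍ) (hFH : MapsTo F ℍ ℍ)
    (hc : Tendsto c atTop (𝓝 c₀)) {a : ℝ}
    (hF0 : Tendsto (fun t : ℝ => F (I * t + c t)) atTop (𝓝 0))
    (ha : Tendsto (fun t : ℝ => t * (F (I * t + c t)).im) atTop (𝓝 a)) (hz : 0 < z.im) :
    z.im * normSq (F z) ≤ a * (F z).im := by
  have hbound : ∀ᶠ t : ℝ in atTop,
      z.im * ((I * t + c t).im / t) * normSq (F (I * t + c t) - conj (F z))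
        ≤ (F z).im * (t * (F (I * t + c t)).im) * (normSq (I * t + (c t - conj z)) / t ^ 2) := by
    -- Schwarz–Pick at `z` and `I * t + c t`, divided by `t`
    filter_upwards [eventually_I_mul_add_mem hc, eventually_gt_atTop 0] with t hw ht
    have hsp := (div_le_div_iff_of_pos_right ht).mpr (im_mul_im_mul_normSq_le hF hFH hz hw)
    simp only [add_sub_assoc] at hsp
    refine (Eq.le ?_).trans (hsp.trans (Eq.le ?_))
    · ring
    · field_simp
  have hlim := le_of_tendsto_of_tendsto
    (((tendsto_im_I_mul_add_div hc).const_mul _).mul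
      (((continuous_normSq.tendsto _).comp (hF0.sub_const _))))
    ((ha.const_mul _).mul (tendsto_normSq_I_mul_add_div_sq (hc.sub_const _))) hbound
  simpa [mul_comm] using hlim

theorem pos_of_tendsto_mul_im (hF : DifferentiableOn ℂ F ℍ) (hFH : MapsTo F ℍ ℍ)
    (hc : Tendsto c atTop (𝓝 c₀)) {a : ℝ}
    (hF0 : Tendsto (fun t : ℝ => F (I * t + c t)) atTop (𝓝 0))
    (ha : Tendsto (fun t : ℝ => t * (F (I * t + c t)).im) atTop (𝓝 a)) : 0 < a := by
  have hFI : 0 < (F I).im := hFH (show I ∈ ℍ by simp)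
  have hnormSq : 0 < normSq (F I) := normSq_pos.mpr fun h0 => by simp [h0] at hFI
  have hI := im_mul_normSq_le_of_tendsto hF hFH hc hF0 ha (z := I) (by simp)
  rw [I_im, one_mul] at hI
  exact pos_of_mul_pos_left (hnormSq.trans_le hI) hFI.le

theorem mapsTo_sub_self_of_tendsto (hF : DifferentiableOn ℂ F ℍ) (hFH : MapsTo F ℍ ℍ)
    (hc : Tendsto c atTop (𝓝 0))
    (he : Tendsto (fun t : ℝ => F (I * t + c t) - I * t) atTop (𝓝 0))
    {q : ℂ} (hq : q ∈ ℍ) (hFq : F q ≠ q) : MapsTo (fun z => F z - z) ℍ ℍ := by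
  refine (mapsTo_upperHalfPlane_or_eq_const (hF.sub differentiableOn_id) fun z hz =>
    sub_nonneg.mpr ?_).resolve_left ?_
  · simpa using im_le_im_of_tendsto hF hFH hc he hz
  rintro ⟨b, hb⟩
  have hb0 : b = 0 := by
    refine tendsto_nhds_unique (tendsto_const_nhds.congr'
      ((eventually_I_mul_add_mem hc).mono fun t ht => (hb _ ht).symm)) ?_
    simpa [sub_add_eq_sub_sub] using he.sub hc
  exact hFq (sub_eq_zero.mp ((hb q hq).trans hb0))

end SelfMaps

theorem tendsto_I_mul_comap_norm_inf_principal_sdiff {K : Set ℂ} (hK : Bornology.IsBounded K) :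
    Tendsto (fun t : ℝ => I * t) atTop (comap (fun z : ℂ => ‖z‖) atTop ⊓ 𝓟 (ℍ \ K)) := by
  have hnorm : Tendsto (fun t : ℝ => ‖I * (t : ℂ)‖) atTop atTop := by
    simpa only [norm_mul, norm_I, one_mul, norm_real, Real.norm_eq_abs] using
      tendsto_abs_atTop_atTop
  refine tendsto_inf.mpr ⟨tendsto_comap_iff.mpr hnorm, tendsto_principal.mpr ?_⟩
  filter_upwards [eventually_gt_atTop 0,
    tendsto_norm_atTop_iff_cobounded.mp hnorm (Bornology.isBounded_def.mp hK)] with t ht htK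
  exact ⟨by simpa using ht, htK⟩

/-- Positivity of capacity: the capacity of a nonempty hull is strictly positive. -/
theorem capacity_pos_of_nonempty_hull
    (K : Set ℂ) (hK : IsHull K) (hKne : (K ∩ {z : ℂ | 0 < z.im}).Nonempty)
    (g : ℂ → ℂ) (a : ℝ)
    (hholo : DifferentiableOn ℂ g ({z : ℂ | 0 < z.im} \ K))
    (hbij : Set.BijOn g ({z : ℂ | 0 < z.im} \ K) {z : ℂ | 0 < z.im})
    (hnorm : Tendsto (fun z : ℂ => g z - z)
      (comap (fun z : ℂ => ‖z‖) atTop ⊓ 𝓟 ({z : ℂ | 0 < z.im} \ K)) (nhds 0))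
    (hcap : Tendsto (fun z : ℂ => z * (g z - z))
      (comap (fun z : ℂ => ‖z‖) atTop ⊓ 𝓟 ({z : ℂ | 0 < z.im} \ K))
      (nhds (a : ℂ))) :
    0 < a := by
  have hSo : IsOpen (ℍ \ K) := (isOpen_lt continuous_const continuous_im).sdiff hK.1.isClosed
  set f := invFunOn g (ℍ \ K)
  have hf : DifferentiableOn ℂ f ℍ :=
    hbij.image_eq ▸ differentiableOn_invFunOn hholo hSo hbij.injOn
  have hfS : MapsTo f ℍ (ℍ \ K) := hbij.surjOn.mapsTo_invFunOn
  have hray := tendsto_I_mul_comap_norm_inf_principal_sdiff hK.1.isBounded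
  set c := fun t : ℝ => g (I * t) - I * t
  have hc : Tendsto c atTop (𝓝 0) := hnorm.comp hray
  have hfc : ∀ᶠ t : ℝ in atTop, f (I * t + c t) = I * t :=
    (tendsto_principal.mp (tendsto_inf.mp hray).2).mono fun t ht => by
      simpa [c] using hbij.injOn.leftInvOn_invFunOn ht
  obtain ⟨q, hqK, hqH⟩ := hKne
  have hφ := mapsTo_sub_self_of_tendsto hf (fun w hw => (hfS hw).1) hc
    (tendsto_const_nhds.congr' (hfc.mono fun t ht => by simp [ht])) hqH
    fun hfq => (hfS hqH).2 (by rwa [hfq])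
  have hφc : ∀ᶠ t : ℝ in atTop, f (I * t + c t) - (I * t + c t) = -c t :=
    hfc.mono fun t ht => by rw [ht]; ring
  refine pos_of_tendsto_mul_im (F := fun z => f z - z) (hf.sub differentiableOn_id) hφ hc
    (by simpa using hc.neg.congr' (hφc.mono fun t ht => ht.symm))
    (((continuous_re.tendsto _).comp (hcap.comp hray)).congr' (hφc.mono fun t ht => ?_))
  simp only [Function.comp_apply]
  rw [ht]
  simp [c, mul_re]
  ring
end

section
/- For ρ > 1 define the elliptic integrals K(ρ) := ∫₀¹ dt/√(t(1−t)(ρ−t)) and K'(ρ) := ∫₁^ρ dt/√(t(t−1)(ρ−t)). Then the ratio ρ ↦ K'(ρ)/K(ρ) is strictly increasing on (1,∞). (Hence the aspect ratio of the conformal rectangle is a strictly increasing function of the cross-ratio parameter ρ, so the π-extremal distance between two boundary arcs of a simply connected domain is uniquely determined.) -/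
/-!
`K(ρ)` and, after the substitution `t = 1 + (ρ - 1) s`, `K'(ρ)` are integrals
`∫₀¹ dt / √(t (1 - t) w(t))` with weights `ρ - t` and `1 + (ρ - 1) s`, and multiplying such an
integral by `√ρ` divides its weight by `ρ`. The weights `1 - t/ρ` and `s + (1 - s)/ρ` of
`√ρ K(ρ)` and `√ρ K'(ρ)` respectively increase and decrease strictly with `ρ`, so `√ρ K(ρ)` is
strictly decreasing, `√ρ K'(ρ)` strictly increasing, and their quotient `K'(ρ)/K(ρ)` strictly
increasing.
-/

open Set Filter

/-- The elliptic integral `K(ρ) = ∫₀¹ dt/√(t(1−t)(ρ−t))`. -/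
noncomputable def ellipticK (ρ : ℝ) : ℝ :=
  ∫ t in (0:ℝ)..1, 1 / Real.sqrt (t * (1 - t) * (ρ - t))

/-- The elliptic integral `K'(ρ) = ∫₁^ρ dt/√(t(t−1)(ρ−t))`. -/
noncomputable def ellipticK' (ρ : ℝ) : ℝ :=
  ∫ t in (1:ℝ)..ρ, 1 / Real.sqrt (t * (t - 1) * (ρ - t))

open MeasureTheory Real

/-- The integral of `w^(-1/2)` against the arcsine density `1/√(t(1-t))` on `[0, 1]`. -/
noncomputable def arcsineIntegral (w : ℝ → ℝ) : ℝ :=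
  ∫ t in (0:ℝ)..1, 1 / √(t * (1 - t) * w t)

-- `1/√(t(1-t))` is the derivative of `arcsin (2t - 1)`, which is continuous on `[0, 1]`.
lemma intervalIntegrable_one_div_sqrt_mul_one_sub :
    IntervalIntegrable (fun t : ℝ => 1 / √(t * (1 - t))) volume 0 1 := by
  refine intervalIntegral.intervalIntegrable_deriv_of_nonneg (g := fun t => arcsin (2 * t - 1))
    (by fun_prop) (fun t ht => ?_) (fun t _ => by positivity)
  simp only [min_eq_left zero_le_one, max_eq_right zero_le_one, mem_Ioo] at ht
  refine ((hasDerivAt_arcsin (x := 2 * t - 1) (by linarith) (by linarith)).comp t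
    (((hasDerivAt_id t).const_mul 2).sub_const 1)).congr_deriv ?_
  rw [show 1 - (2 * t - 1) ^ 2 = 2 ^ 2 * (t * (1 - t)) by ring,
    sqrt_mul (by norm_num), sqrt_sq (by norm_num)]
  field_simp

section ArcsineIntegral

variable {v w : ℝ → ℝ}

lemma intervalIntegrable_arcsineIntegrand (hw : Continuous w)
    (hpos : ∀ t ∈ Icc (0:ℝ) 1, 0 < w t) :
    IntervalIntegrable (fun t => 1 / √(t * (1 - t) * w t)) volume 0 1 := by
  obtain ⟨t₀, ht₀, hmin⟩ :=
    isCompact_Icc.exists_isMinOn (nonempty_Icc.2 zero_le_one) hw.continuousOn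
  refine (intervalIntegrable_one_div_sqrt_mul_one_sub.const_mul (1 / √(w t₀))).mono_fun'
    (by fun_prop : Measurable _).aestronglyMeasurable
    (ae_restrict_of_forall_mem measurableSet_uIoc fun t ht => ?_)
  rw [uIoc_of_le zero_le_one] at ht
  have hx : 0 ≤ t * (1 - t) := mul_nonneg ht.1.le (by linarith [ht.2])
  dsimp only
  rw [norm_of_nonneg (by positivity), sqrt_mul hx, ← one_div_mul_one_div, mul_comm]
  gcongr
  · exact sqrt_pos.2 (hpos t₀ ht₀)
  · exact hmin ⟨ht.1.le, ht.2⟩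

lemma arcsineIntegral_pos (hw : Continuous w) (hpos : ∀ t ∈ Icc (0:ℝ) 1, 0 < w t) :
    0 < arcsineIntegral w := by
  refine intervalIntegral.intervalIntegral_pos_of_pos_on
    (intervalIntegrable_arcsineIntegrand hw hpos) (fun t ht => ?_) zero_lt_one
  have := hpos t (Ioo_subset_Icc_self ht)
  have : 0 < 1 - t := by linarith [ht.2]
  have := ht.1
  positivity

lemma arcsineIntegral_lt_of_lt (hv : Continuous v) (hw : Continuous w)
    (hv₀ : ∀ t ∈ Icc (0:ℝ) 1, 0 < v t) (hw₀ : ∀ t ∈ Icc (0:ℝ) 1, 0 < w t)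
    (hvw : ∀ t ∈ Ioo (0:ℝ) 1, v t < w t) :
    arcsineIntegral w < arcsineIntegral v := by
  have hv_int := intervalIntegrable_arcsineIntegrand hv hv₀
  have hw_int := intervalIntegrable_arcsineIntegrand hw hw₀
  rw [← sub_pos, arcsineIntegral, arcsineIntegral, ← intervalIntegral.integral_sub hv_int hw_int]
  refine intervalIntegral.intervalIntegral_pos_of_pos_on (hv_int.sub hw_int) (fun t ht => ?_)
    zero_lt_one
  have hx : 0 < t * (1 - t) := mul_pos ht.1 (by linarith [ht.2])
  have := hv₀ t (Ioo_subset_Icc_self ht)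
  rw [sub_pos]
  gcongr
  exact hvw t ht

lemma sqrt_mul_arcsineIntegral {c : ℝ} (hc : 0 < c) :
    √c * arcsineIntegral w = arcsineIntegral (fun t => w t / c) := by
  rw [arcsineIntegral, arcsineIntegral, ← intervalIntegral.integral_const_mul]
  congr 1 with t
  rw [show t * (1 - t) * (w t / c) = t * (1 - t) * w t / c by ring, sqrt_div' _ hc.le,
    one_div_div, mul_one_div]

end ArcsineIntegral

lemma ellipticK_eq_arcsineIntegral (ρ : ℝ) :
    ellipticK ρ = arcsineIntegral (fun t => ρ - t) :=
  rfl

lemma ellipticK'_eq_arcsineIntegral {ρ : ℝ} (hρ : 1 < ρ) :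
    ellipticK' ρ = arcsineIntegral (fun s => 1 + (ρ - 1) * s) := by
  have hc : ρ - 1 ≠ 0 := sub_ne_zero.2 hρ.ne'
  have h := intervalIntegral.integral_comp_mul_add (a := 0) (b := 1)
    (fun t => 1 / √(t * (t - 1) * (ρ - t))) hc 1
  rw [mul_zero, zero_add, mul_one, sub_add_cancel, eq_inv_smul_iff₀ hc,
    ← intervalIntegral.integral_smul] at h
  rw [ellipticK', ← h, arcsineIntegral]
  congr 1 with s
  rw [smul_eq_mul, show ((ρ - 1) * s + 1) * ((ρ - 1) * s + 1 - 1) * (ρ - ((ρ - 1) * s + 1))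
      = (ρ - 1) ^ 2 * (s * (1 - s) * (1 + (ρ - 1) * s)) by ring,
    sqrt_mul (sq_nonneg _), sqrt_sq (sub_nonneg.2 hρ.le), ← mul_div_assoc,
    mul_div_mul_left _ _ hc]

lemma ellipticK_pos {ρ : ℝ} (hρ : 1 < ρ) : 0 < ellipticK ρ := by
  rw [ellipticK_eq_arcsineIntegral]
  exact arcsineIntegral_pos (by fun_prop) fun t ht => by linarith [ht.2]

lemma ellipticK'_pos {ρ : ℝ} (hρ : 1 < ρ) : 0 < ellipticK' ρ := by
  rw [ellipticK'_eq_arcsineIntegral hρ]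
  exact arcsineIntegral_pos (by fun_prop) fun s hs => by nlinarith [hs.1]

lemma strictAntiOn_sqrt_mul_ellipticK :
    StrictAntiOn (fun ρ => √ρ * ellipticK ρ) (Ioi 1) := by
  intro a (ha : 1 < a) b (hb : 1 < b) hab
  simp only [ellipticK_eq_arcsineIntegral, sqrt_mul_arcsineIntegral (zero_lt_one.trans ha),
    sqrt_mul_arcsineIntegral (zero_lt_one.trans hb)]
  refine arcsineIntegral_lt_of_lt (by fun_prop) (by fun_prop) (fun t ht => ?_) (fun t ht => ?_)
    (fun t ht => ?_)
  · exact div_pos (by linarith [ht.2]) (by linarith)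
  · exact div_pos (by linarith [ht.2]) (by linarith)
  · rw [div_lt_div_iff₀ (by linarith) (by linarith)]
    nlinarith [ht.1]

lemma strictMonoOn_sqrt_mul_ellipticK' :
    StrictMonoOn (fun ρ => √ρ * ellipticK' ρ) (Ioi 1) := by
  intro a (ha : 1 < a) b (hb : 1 < b) hab
  simp only [ellipticK'_eq_arcsineIntegral ha, ellipticK'_eq_arcsineIntegral hb,
    sqrt_mul_arcsineIntegral (zero_lt_one.trans ha),
    sqrt_mul_arcsineIntegral (zero_lt_one.trans hb)]
  refine arcsineIntegral_lt_of_lt (by fun_prop) (by fun_prop) (fun s hs => ?_) (fun s hs => ?_)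
    (fun s hs => ?_)
  · exact div_pos (by nlinarith [hs.1]) (by linarith)
  · exact div_pos (by nlinarith [hs.1]) (by linarith)
  · rw [div_lt_div_iff₀ (by linarith) (by linarith)]
    nlinarith [mul_pos (sub_pos.2 hab) (sub_pos.2 hs.2)]

/-- The aspect ratio `K'(ρ)/K(ρ)` of the conformal rectangle is a strictly increasing
function of the cross-ratio parameter `ρ ∈ (1,∞)`; hence the π-extremal distance between
two boundary arcs of a simply connected domain is uniquely determined. -/
theorem aspect_ratio_strictMono :
    StrictMonoOn (fun ρ => ellipticK' ρ / ellipticK ρ) (Ioi (1:ℝ)) := by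
  intro a ha b hb hab
  have hscale : ∀ ρ ∈ Ioi (1:ℝ),
      ellipticK' ρ / ellipticK ρ = (√ρ * ellipticK' ρ) / (√ρ * ellipticK ρ) := fun ρ hρ =>
    (mul_div_mul_left _ _ (sqrt_ne_zero'.2 (zero_lt_one.trans hρ))).symm
  have hsqrt_b : 0 < √b := sqrt_pos.2 (zero_lt_one.trans hb)
  simp only [hscale a ha, hscale b hb]
  exact div_lt_div₀ (strictMonoOn_sqrt_mul_ellipticK' ha hb hab)
    (strictAntiOn_sqrt_mul_ellipticK ha hb hab).le (mul_pos hsqrt_b (ellipticK'_pos hb)).le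
    (mul_pos hsqrt_b (ellipticK_pos hb))
end
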